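/- arXiv:2112.00864 — 3 statements merged into one kernel-verified Lean document; each statement's English description precedes it below -/
import Mathlib

section
/- Let A, B be index sets at level ℓ+1 obtained by refining every index of level ℓ (each ω ∈ C_ℓ has a set of children K(ω) with ⋃_{ω' ∈ K(ω)} ω' = ω). Suppose neighbors and interaction lists satisfy: for ω ∈ C_{ℓ+1}, N(ω) ∪ I(ω) = ⋃_{ω'' ∈ N(π(ω))} K(ω'') where π(ω) is the parent of ω and N(ω) ∩ I(ω) = ∅. If level ℓ has no leaves (every cell is refined), then ⋃_{ω ∈ C_ℓ} ω × N(ω) = (⋃_{ω ∈ C_{ℓ+1}} ω × N(ω)) ∪ (⋃_{ω ∈ C_{ℓ+1}} ω × I(ω)), and the two unions on the right are disjoint as subsets of Ω × Ω. -/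
/-!
Refining both factors of `ω × N(ω)` writes it as the union of `c × d` over children `c` of `ω`
and children `d` of neighbors of `ω = π(c)`; by hypothesis those `d` are exactly `N(c) ∪ I(c)`.
Disjointness of the two pieces holds because a point of `Ω × Ω` determines the pair of
level-`ℓ+1` cells containing it, and `N(c) ∩ I(c) = ∅`.
-/

open Set

section CellPairs

variable {α ι : Type*}

/-- The paper's `⋃_{ω ∈ C} ω × L(ω)`, a list of cells standing for the union of its cells. -/
def cellPairs (cell : ι → Set α) (C : Set ι) (L : ι → Set ι) : Set (α × α) :=
  ⋃ ω ∈ C, cell ω ×ˢ ⋃ ω' ∈ L ω, cell ω'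

variable {cell : ι → Set α} {C : Set ι}

theorem cellPairs_congr {L M : ι → Set ι} (h : ∀ ω ∈ C, L ω = M ω) :
    cellPairs cell C L = cellPairs cell C M :=
  iUnion₂_congr fun ω hω => by rw [h ω hω]

theorem cellPairs_union (L M : ι → Set ι) :
    cellPairs cell C (fun ω => L ω ∪ M ω) = cellPairs cell C L ∪ cellPairs cell C M := by
  simp only [cellPairs, biUnion_union, prod_union, iUnion_union_distrib]

theorem disjoint_cellPairs {L M : ι → Set ι} (hC : C.PairwiseDisjoint cell)
    (hL : ∀ ω ∈ C, L ω ⊆ C) (hM : ∀ ω ∈ C, M ω ⊆ C) (hLM : ∀ ω ∈ C, Disjoint (L ω) (M ω)) :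
    Disjoint (cellPairs cell C L) (cellPairs cell C M) := by
  rw [disjoint_left]
  rintro ⟨x, y⟩ hxyL hxyM
  simp only [cellPairs, mem_iUnion, mem_prod] at hxyL hxyM
  obtain ⟨c, hc, hx, d, hd, hy⟩ := hxyL
  obtain ⟨c', hc', hx', d', hd', hy'⟩ := hxyM
  obtain rfl := hC.elim_set hc hc' x hx hx'
  obtain rfl := hC.elim_set (hL c hc hd) (hM c hc hd') y hy hy'
  exact disjoint_left.1 (hLM c hc) hd hd'

theorem cellPairs_eq_cellPairs_children {K : ι → Set ι} {π : ι → ι} {N : ι → Set ι}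
    (hrefine : ∀ ω ∈ C, ⋃ c ∈ K ω, cell c = cell ω) (hpar : ∀ ω ∈ C, ∀ c ∈ K ω, π c = ω)
    (hN : ∀ ω ∈ C, N ω ⊆ C) :
    cellPairs cell C N = cellPairs cell (⋃ ω ∈ C, K ω) (fun c => ⋃ ω' ∈ N (π c), K ω') := by
  calc cellPairs cell C N
      = ⋃ ω ∈ C, ⋃ c ∈ K ω, cell c ×ˢ ⋃ ω' ∈ N ω, ⋃ d ∈ K ω', cell d := by
        refine iUnion₂_congr fun ω hω => ?_
        rw [← hrefine ω hω, iUnion₂_prod_const,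
          iUnion₂_congr fun ω' hω' => (hrefine ω' (hN ω hω hω')).symm]
    _ = ⋃ ω ∈ C, ⋃ c ∈ K ω, cell c ×ˢ ⋃ d ∈ ⋃ ω' ∈ N (π c), K ω', cell d := by
        refine iUnion₂_congr fun ω hω => iUnion₂_congr fun c hc => ?_
        rw [hpar ω hω c hc]
        simp only [biUnion_iUnion]
    _ = cellPairs cell (⋃ ω ∈ C, K ω) (fun c => ⋃ ω' ∈ N (π c), K ω') := by
        simp only [cellPairs, biUnion_iUnion]

end CellPairs

/-- Splitting of neighbor interactions at a level with no leaves: if every cell of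
level `ℓ` is refined into children partitioning it, and for each child the neighbor
and interaction lists satisfy `N(ω) ∪ I(ω) = children of N(π(ω))` with
`N(ω) ∩ I(ω) = ∅`, then
`⋃_{ω ∈ C_ℓ} ω × N(ω) = ⋃_{ω ∈ C_{ℓ+1}} ω × N(ω) ∪ ⋃_{ω ∈ C_{ℓ+1}} ω × I(ω)`,
and the two unions on the right are disjoint. -/
theorem stmt_11 {α ι : Type*} (cell : ι → Set α)
    (Cl Cl1 : Set ι) (K : ι → Set ι) (π : ι → ι) (N I : ι → Set ι)
    -- every level-ℓ cell is refined: its children partition it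
    (hrefine : ∀ ω ∈ Cl, (⋃ ω' ∈ K ω, cell ω') = cell ω)
    -- the next level consists exactly of the children
    (hnext : Cl1 = ⋃ ω ∈ Cl, K ω)
    -- parent structure
    (hpar : ∀ ω ∈ Cl, ∀ ω' ∈ K ω, π ω' = ω)
    -- neighbors plus interaction list of a child are the children of the parent's neighbors
    (hNI : ∀ ω ∈ Cl1, N ω ∪ I ω = ⋃ ω'' ∈ N (π ω), K ω'')
    (hNIdisj : ∀ ω ∈ Cl1, N ω ∩ I ω = ∅)
    -- neighbor lists stay within the level
    (hNsub : ∀ ω ∈ Cl, N ω ⊆ Cl)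
    -- cells of level ℓ+1 are pairwise disjoint
    (hdisj : ∀ ω ∈ Cl1, ∀ ω' ∈ Cl1, ω ≠ ω' → Disjoint (cell ω) (cell ω')) :
    (⋃ ω ∈ Cl, cell ω ×ˢ ⋃ ω' ∈ N ω, cell ω')
      = (⋃ ω ∈ Cl1, cell ω ×ˢ ⋃ ω' ∈ N ω, cell ω')
        ∪ (⋃ ω ∈ Cl1, cell ω ×ˢ ⋃ ω' ∈ I ω, cell ω') ∧
    Disjoint (⋃ ω ∈ Cl1, cell ω ×ˢ ⋃ ω' ∈ N ω, cell ω')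
             (⋃ ω ∈ Cl1, cell ω ×ˢ ⋃ ω' ∈ I ω, cell ω') := by
  have hchildren : ∀ c ∈ Cl1, N c ∪ I c ⊆ Cl1 := by
    intro c hc
    obtain ⟨ω, hω, hcK⟩ := mem_iUnion₂.1 (hnext ▸ hc)
    rw [hNI c hc, hpar ω hω c hcK, hnext]
    exact biUnion_subset_biUnion_left (hNsub ω hω)
  show cellPairs cell Cl N = cellPairs cell Cl1 N ∪ cellPairs cell Cl1 I ∧
    Disjoint (cellPairs cell Cl1 N) (cellPairs cell Cl1 I)
  constructor
  · calc cellPairs cell Cl N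
        = cellPairs cell Cl1 (fun c => ⋃ ω' ∈ N (π c), K ω') := by
          rw [hnext]; exact cellPairs_eq_cellPairs_children hrefine hpar hNsub
      _ = cellPairs cell Cl1 (fun c => N c ∪ I c) := cellPairs_congr fun c hc => (hNI c hc).symm
      _ = cellPairs cell Cl1 N ∪ cellPairs cell Cl1 I := cellPairs_union N I
  · exact disjoint_cellPairs (fun ω hω ω' hω' => hdisj ω hω ω' hω')
      (fun c hc => subset_union_left.trans (hchildren c hc))
      (fun c hc => subset_union_right.trans (hchildren c hc))
      (fun c hc => disjoint_iff_inter_eq_empty.2 (hNIdisj c hc))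
end

section
/- With the hierarchical cell structure of a boundary-concentrated refinement (each level ℓ cell set C_ℓ partitioned into marked cells M_ℓ, which are refined, and leaves L_ℓ; extended neighbor list N*(ω) = N_M(ω) ∪ ⋃_{ℓ'=0}^{ℓ(ω)} N_L(π_{ℓ'}(ω))), the following set identity holds: ⋃_{ω ∈ M_ℓ} ω × N*(ω) = ⋃_{ω ∈ M_{ℓ+1}} ω × N*(ω) ∪ ⋃_{ω ∈ L_{ℓ+1}} ω × N*(ω) ∪ ⋃_{ω ∈ C_{ℓ+1}} ω × I(ω). -/
/-!
A marked cell ω of level ℓ is the union of its children ω', so it suffices to show that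
N*(ω') ∪ I(ω') covers the same region as N*(ω). The leaf neighbours of the ancestors of ω' up
to level ℓ are those of ω; the remaining part N(ω') ∪ I(ω') of N*(ω') ∪ I(ω') consists
exactly of the children of the marked neighbours N_M(ω), which cover the same region as
N_M(ω). Splitting C_{ℓ+1} into M_{ℓ+1} and L_{ℓ+1} then gives the identity.
-/

open Set

theorem biUnion_children_eq_of_refine {α ι : Type*} {S : Set ι} {K : ι → Set ι}
    {cell : ι → Set α} (hrefine : ∀ ω ∈ S, ⋃ ω' ∈ K ω, cell ω' = cell ω) :
    ⋃ ω' ∈ ⋃ ω ∈ S, K ω, cell ω' = ⋃ ω ∈ S, cell ω := by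
  simp only [biUnion_iUnion]
  exact iUnion₂_congr hrefine

theorem biUnion_prod_eq_biUnion_children_prod {α β ι : Type*} {S : Set ι} {K : ι → Set ι}
    {cell : ι → Set α} {F G : ι → Set β}
    (hrefine : ∀ ω ∈ S, ⋃ ω' ∈ K ω, cell ω' = cell ω)
    (hF : ∀ ω ∈ S, ∀ ω' ∈ K ω, F ω' = G ω) :
    ⋃ ω ∈ S, cell ω ×ˢ G ω = ⋃ ω' ∈ ⋃ ω ∈ S, K ω, cell ω' ×ˢ F ω' := by
  simp only [biUnion_iUnion]
  refine iUnion₂_congr fun ω hω => ?_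
  rw [← hrefine ω hω, iUnion₂_prod_const]
  exact iUnion₂_congr fun ω' hω' => by rw [hF ω hω ω' hω']

theorem nstar_union_interaction_of_child {ι : Type*} {M L : ℕ → Set ι}
    {K N I Nstar : ι → Set ι} {par : ℕ → ι → ι} {lvl : ι → ℕ} {ℓ : ℕ} {ω ω' : ι}
    (hNstar : Nstar ω' = (N ω' ∩ M (lvl ω')) ∪ ⋃ m ∈ Iic (lvl ω'), N (par m ω') ∩ L m)
    (hlvl : lvl ω' = ℓ + 1) (hparself : par (ℓ + 1) ω' = ω')
    (hparchild : ∀ m ≤ ℓ, par m ω' = par m ω)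
    (hNI : N ω' ∪ I ω' = ⋃ w ∈ N ω ∩ M ℓ, K w)
    (hNC : N ω' ⊆ M (ℓ + 1) ∪ L (ℓ + 1)) :
    Nstar ω' ∪ I ω' = (⋃ w ∈ N ω ∩ M ℓ, K w) ∪ ⋃ m ∈ Iic ℓ, N (par m ω) ∩ L m := by
  have hanc : ⋃ m ∈ Iic ℓ, N (par m ω') ∩ L m = ⋃ m ∈ Iic ℓ, N (par m ω) ∩ L m :=
    iUnion₂_congr fun m hm => by rw [hparchild m hm]
  have hNstar' : Nstar ω' = N ω' ∪ ⋃ m ∈ Iic ℓ, N (par m ω) ∩ L m := by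
    rw [hNstar, hlvl, ← hanc]
    simp only [mem_Iic, biUnion_le_succ, hparself]
    rw [union_comm _ (N ω' ∩ L _), ← union_assoc, ← inter_union_distrib_left,
      inter_eq_left.mpr hNC]
  rw [hNstar', union_right_comm, hNI]

theorem stmt_12_general {α ι : Type*} (cell : ι → Set α) (lvl : ι → ℕ)
    (C M L : ℕ → Set ι) (K : ι → Set ι) (N I : ι → Set ι) (par : ℕ → ι → ι)
    (Nstar : ι → Set ι) (ℓ : ℕ)
    -- each level splits into marked cells and leaves
    (hCML : ∀ m, C m = M m ∪ L m)
    -- the next level consists of the children of the marked cells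
    (hCnext : ∀ m, C (m + 1) = ⋃ ω ∈ M m, K ω)
    -- level function
    (hlvl : ∀ m, ∀ ω ∈ C m, lvl ω = m)
    -- ancestors: a cell is its own ancestor at its own level,
    (hparself : ∀ ω, par (lvl ω) ω = ω)
    -- and ancestors of a child below its parent's level agree with those of the parent
    (hparchild : ∀ m, ∀ ω ∈ M m, ∀ ω' ∈ K ω, ∀ m' ≤ m, par m' ω' = par m' ω)
    -- children partition their parent
    (hrefine : ∀ m, ∀ ω ∈ M m, (⋃ ω' ∈ K ω, cell ω') = cell ω)
    -- neighbors plus interaction list of a child are the children of the parent's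
    -- marked neighbors
    (hNI : ∀ m, ∀ ω ∈ C (m + 1), N ω ∪ I ω = ⋃ ω'' ∈ N (par m ω) ∩ M m, K ω'')
    -- definition of the extended neighbor list
    (hNstar : ∀ ω, Nstar ω
      = (N ω ∩ M (lvl ω)) ∪ ⋃ m ∈ Set.Iic (lvl ω), (N (par m ω) ∩ L m)) :
    (⋃ ω ∈ M ℓ, cell ω ×ˢ ⋃ ω' ∈ Nstar ω, cell ω')
      = (⋃ ω ∈ M (ℓ + 1), cell ω ×ˢ ⋃ ω' ∈ Nstar ω, cell ω')
        ∪ (⋃ ω ∈ L (ℓ + 1), cell ω ×ˢ ⋃ ω' ∈ Nstar ω, cell ω')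
        ∪ (⋃ ω ∈ C (ℓ + 1), cell ω ×ˢ ⋃ ω' ∈ I ω, cell ω') := by
  have hchildren : ⋃ ω ∈ M ℓ, K ω ⊆ M (ℓ + 1) ∪ L (ℓ + 1) := by rw [← hCnext, ← hCML]
  have hchild : ∀ ω ∈ M ℓ, ∀ ω' ∈ K ω,
      ⋃ w ∈ Nstar ω' ∪ I ω', cell w = ⋃ w ∈ Nstar ω, cell w := by
    intro ω hω ω' hω'
    have hω'C : ω' ∈ C (ℓ + 1) := hCnext ℓ ▸ mem_biUnion hω hω'
    have hlvlω : lvl ω = ℓ := hlvl ℓ ω (hCML ℓ ▸ Or.inl hω)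
    have hlvlω' : lvl ω' = ℓ + 1 := hlvl _ ω' hω'C
    have hparℓ : par ℓ ω' = ω := by
      rw [hparchild ℓ ω hω ω' hω' ℓ le_rfl, ← hlvlω, hparself]
    have hNIω' : N ω' ∪ I ω' = ⋃ w ∈ N ω ∩ M ℓ, K w := hparℓ ▸ hNI ℓ ω' hω'C
    have hNC : N ω' ⊆ M (ℓ + 1) ∪ L (ℓ + 1) := subset_union_left.trans <|
      hNIω' ▸ (biUnion_subset_biUnion_left inter_subset_right).trans hchildren
    rw [nstar_union_interaction_of_child (hNstar ω') hlvlω' (hlvlω' ▸ hparself ω')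
      (hparchild ℓ ω hω ω' hω') hNIω' hNC, biUnion_union,
      biUnion_children_eq_of_refine fun w hw => hrefine ℓ w hw.2, hNstar ω, hlvlω, biUnion_union]
  rw [biUnion_prod_eq_biUnion_children_prod (hrefine ℓ) hchild, ← hCnext, hCML]
  simp only [biUnion_union, prod_union, iUnion_union_distrib]

/-- Lemma 3.2 of the paper: with marked cells `M ℓ`, leaves `L ℓ`, `C ℓ = M ℓ ∪ L ℓ`,
children `K`, ancestors `par`, interaction lists `I` and extended neighbor lists
`Nstar ω = (N ω ∩ M (lvl ω)) ∪ ⋃_{ℓ'≤lvl ω} (N(π_{ℓ'} ω) ∩ L ℓ')`, one has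
`⋃_{ω∈M_ℓ} ω × N*(ω) = ⋃_{ω∈M_{ℓ+1}} ω × N*(ω) ∪ ⋃_{ω∈L_{ℓ+1}} ω × N*(ω)
  ∪ ⋃_{ω∈C_{ℓ+1}} ω × I(ω)`. -/
theorem stmt_12 {α ι : Type*} (cell : ι → Set α) (lvl : ι → ℕ)
    (C M L : ℕ → Set ι) (K : ι → Set ι) (N I : ι → Set ι) (par : ℕ → ι → ι)
    (Nstar : ι → Set ι) (ℓ : ℕ)
    -- each level splits into marked cells and leaves
    (hCML : ∀ m, C m = M m ∪ L m)
    (hMLdisj : ∀ m, M m ∩ L m = ∅)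
    -- the next level consists of the children of the marked cells
    (hCnext : ∀ m, C (m + 1) = ⋃ ω ∈ M m, K ω)
    -- level function
    (hlvl : ∀ m, ∀ ω ∈ C m, lvl ω = m)
    -- ancestors: a cell is its own ancestor at its own level,
    (hparself : ∀ ω, par (lvl ω) ω = ω)
    -- and ancestors of a child below its parent's level agree with those of the parent
    (hparchild : ∀ m, ∀ ω ∈ M m, ∀ ω' ∈ K ω, ∀ m' ≤ m, par m' ω' = par m' ω)
    -- children partition their parent
    (hrefine : ∀ m, ∀ ω ∈ M m, (⋃ ω' ∈ K ω, cell ω') = cell ω)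
    -- neighbors plus interaction list of a child are the children of the parent's
    -- marked neighbors
    (hNI : ∀ m, ∀ ω ∈ C (m + 1), N ω ∪ I ω = ⋃ ω'' ∈ N (par m ω) ∩ M m, K ω'')
    (hNIdisj : ∀ ω, N ω ∩ I ω = ∅)
    -- definition of the extended neighbor list
    (hNstar : ∀ ω, Nstar ω
      = (N ω ∩ M (lvl ω)) ∪ ⋃ m ∈ Set.Iic (lvl ω), (N (par m ω) ∩ L m)) :
    (⋃ ω ∈ M ℓ, cell ω ×ˢ ⋃ ω' ∈ Nstar ω, cell ω')
      = (⋃ ω ∈ M (ℓ + 1), cell ω ×ˢ ⋃ ω' ∈ Nstar ω, cell ω')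
        ∪ (⋃ ω ∈ L (ℓ + 1), cell ω ×ˢ ⋃ ω' ∈ Nstar ω, cell ω')
        ∪ (⋃ ω ∈ C (ℓ + 1), cell ω ×ˢ ⋃ ω' ∈ I ω, cell ω') :=
  stmt_12_general cell lvl C M L K N I par Nstar ℓ hCML hCnext hlvl hparself hparchild hrefine hNI
    hNstar
end

section
/- Under the hypotheses of the previous set-decomposition lemma and assuming L_0 could be nonempty, iterating the decomposition from level 0 to the finest level L (where all cells are leaves, L*_L = C_L) yields: Ω × Ω = ⋃_{ℓ=0}^{L} ⋃_{ω ∈ L*_ℓ} ω × N*(ω) ∪ ⋃_{ℓ=0}^{L} ⋃_{ω ∈ C_ℓ} ω × I(ω). -/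
/-!
Refining a subdivided cell `ω` of level `m` into its children `ω'` preserves the near-field
region: the children of the neighbors of `ω` are exactly the neighbors and the interaction list
of `ω'`, and the leaf part of `N*` is inherited from the ancestors, so
`ω × N*(ω) = ⋃_{ω'} ω' × (N*(ω') ∪ I(ω'))`. Hence the near-field over the subdivided cells of
level `m` equals near- plus far-field over all cells of level `m + 1`. At level `0`,
`N*(ω) ∪ I(ω) = C_0` gives `Ω × Ω` as near- plus far-field over `C_0`; telescoping down to
`Lmax` leaves the leaves of each level and, at the last level, all of `C_Lmax = L*_Lmax`.
-/

open Set

section Regions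

variable {α ι : Type*} (cell : ι → Set α)

def region (s : Set ι) : Set α := ⋃ ω ∈ s, cell ω

-- The paper's `⋃_{ω ∈ S} ω × J(ω)`, cells being named by their indices.
def interactionSet (J : ι → Set ι) (S : Set ι) : Set (α × α) :=
  ⋃ ω ∈ S, cell ω ×ˢ region cell (J ω)

theorem region_union (s t : Set ι) : region cell (s ∪ t) = region cell s ∪ region cell t :=
  biUnion_union s t cell

theorem region_biUnion_of_region_eq {S : Set ι} {K : ι → Set ι}
    (hK : ∀ ω ∈ S, region cell (K ω) = cell ω) :
    region cell (⋃ ω ∈ S, K ω) = region cell S := by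
  simp only [region, biUnion_iUnion]
  exact iUnion₂_congr hK

theorem interactionSet_union_left (J : ι → Set ι) (S T : Set ι) :
    interactionSet cell J (S ∪ T) = interactionSet cell J S ∪ interactionSet cell J T :=
  biUnion_union S T _

theorem interactionSet_union_right (J J' : ι → Set ι) (S : Set ι) :
    interactionSet cell (fun ω => J ω ∪ J' ω) S
      = interactionSet cell J S ∪ interactionSet cell J' S := by
  simp only [interactionSet, region_union, prod_union, iUnion_union_distrib]

theorem interactionSet_biUnion (J : ι → Set ι) (S : Set ι) (K : ι → Set ι) :
    interactionSet cell J (⋃ ω ∈ S, K ω) = ⋃ ω ∈ S, interactionSet cell J (K ω) := by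
  simp only [interactionSet, biUnion_iUnion]

theorem region_prod_region_eq_interactionSet {J : ι → Set ι} {S : Set ι}
    (hJ : ∀ ω ∈ S, J ω = S) :
    region cell S ×ˢ region cell S = interactionSet cell J S := by
  simp only [region, iUnion₂_prod_const, interactionSet]
  exact iUnion₂_congr fun ω hω => by rw [hJ ω hω]

theorem prod_region_eq_interactionSet_of_refines {ω : ι} {K : Set ι} {J J' : ι → Set ι}
    (hK : region cell K = cell ω) (hJ : ∀ ω' ∈ K, region cell (J ω) = region cell (J' ω')) :
    cell ω ×ˢ region cell (J ω) = interactionSet cell J' K := by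
  rw [← hK, region, iUnion₂_prod_const]
  exact iUnion₂_congr fun ω' hω' => by rw [hJ ω' hω']

end Regions

theorem eq_biUnion_Iio_union_of_succ {β : Type*} {X : Set β} {F A B : ℕ → Set β}
    (h0 : X = F 0) (hF : ∀ m, F m = A m ∪ B m) (hB : ∀ m, B m = F (m + 1)) (n : ℕ) :
    X = (⋃ m ∈ Iio n, A m) ∪ F n := by
  induction n with
  | zero => simp [h0]
  | succ n ih =>
    rw [ih, hF n, hB n, Iio_add_one_eq_Iic, ← Iio_insert, biUnion_insert, union_assoc,
      union_left_comm]

/- The tree of the statement: `C m` are the cells of level `m`, split into subdivided cells `M m`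
and leaves `L m`; `K ω` are the children of `ω`, `par m ω` its ancestor at level `m`, and `N`, `I`,
`Nstar` the neighbor, interaction and extended neighbor lists. -/
structure IsNearFarHierarchy {α ι : Type*} (cell : ι → Set α) (lvl : ι → ℕ) (C M L : ℕ → Set ι)
    (K N I Nstar : ι → Set ι) (par : ℕ → ι → ι) : Prop where
  C_eq_union : ∀ m, C m = M m ∪ L m
  C_succ : ∀ m, C (m + 1) = ⋃ ω ∈ M m, K ω
  lvl_eq : ∀ m, ∀ ω ∈ C m, lvl ω = m
  par_lvl : ∀ ω, par (lvl ω) ω = ω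
  par_child : ∀ m, ∀ ω ∈ M m, ∀ ω' ∈ K ω, ∀ m' ≤ m, par m' ω' = par m' ω
  region_children : ∀ m, ∀ ω ∈ M m, region cell (K ω) = cell ω
  neighbors_union_interaction :
    ∀ m, ∀ ω ∈ C (m + 1), N ω ∪ I ω = ⋃ ω'' ∈ N (par m ω) ∩ M m, K ω''
  nstar_eq : ∀ ω, Nstar ω = (N ω ∩ M (lvl ω)) ∪ ⋃ m ∈ Iic (lvl ω), (N (par m ω) ∩ L m)

namespace IsNearFarHierarchy

variable {α ι : Type*} {cell : ι → Set α} {lvl : ι → ℕ} {C M L : ℕ → Set ι}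
  {K N I Nstar : ι → Set ι} {par : ℕ → ι → ι} {m : ℕ} {ω ω' : ι}

theorem mem_C_of_mem_M (H : IsNearFarHierarchy cell lvl C M L K N I Nstar par)
    (hω : ω ∈ M m) : ω ∈ C m :=
  H.C_eq_union m ▸ Or.inl hω

theorem mem_C_succ (H : IsNearFarHierarchy cell lvl C M L K N I Nstar par)
    (hω : ω ∈ M m) (hω' : ω' ∈ K ω) : ω' ∈ C (m + 1) :=
  H.C_succ m ▸ mem_biUnion hω hω'

theorem par_eq_self (H : IsNearFarHierarchy cell lvl C M L K N I Nstar par)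
    (hω : ω ∈ C m) : par m ω = ω :=
  H.lvl_eq m ω hω ▸ H.par_lvl ω

theorem par_child_eq (H : IsNearFarHierarchy cell lvl C M L K N I Nstar par)
    (hω : ω ∈ M m) (hω' : ω' ∈ K ω) : par m ω' = ω := by
  rw [H.par_child m ω hω ω' hω' m le_rfl, H.par_eq_self (H.mem_C_of_mem_M hω)]

theorem neighbors_union_interaction_child (H : IsNearFarHierarchy cell lvl C M L K N I Nstar par)
    (hω : ω ∈ M m) (hω' : ω' ∈ K ω) : N ω' ∪ I ω' = ⋃ ω'' ∈ N ω ∩ M m, K ω'' := by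
  rw [H.neighbors_union_interaction m ω' (H.mem_C_succ hω hω'), H.par_child_eq hω hω']

theorem neighbors_subset_child (H : IsNearFarHierarchy cell lvl C M L K N I Nstar par)
    (hω : ω ∈ M m) (hω' : ω' ∈ K ω) : N ω' ⊆ C (m + 1) := by
  calc N ω' ⊆ N ω' ∪ I ω' := subset_union_left
    _ = ⋃ ω'' ∈ N ω ∩ M m, K ω'' := H.neighbors_union_interaction_child hω hω'
    _ ⊆ C (m + 1) := H.C_succ m ▸ biUnion_mono inter_subset_right fun _ _ => subset_rfl

theorem nstar_eq_of_neighbors_subset (H : IsNearFarHierarchy cell lvl C M L K N I Nstar par)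
    (hω : ω ∈ C m) (hN : N ω ⊆ C m) :
    Nstar ω = N ω ∪ ⋃ m' ∈ Iio m, N (par m' ω) ∩ L m' := by
  rw [H.nstar_eq, H.lvl_eq m ω hω, ← Iio_insert, biUnion_insert, H.par_eq_self hω,
    ← union_assoc, ← inter_union_distrib_left, ← H.C_eq_union, inter_eq_left.mpr hN]

theorem nstar_union_interaction_eq_of_level_zero
    (H : IsNearFarHierarchy cell lvl C M L K N I Nstar par)
    (hω : ω ∈ C 0) (h0 : N ω ∪ I ω = C 0) : Nstar ω ∪ I ω = C 0 := by
  rw [H.nstar_eq_of_neighbors_subset hω (h0 ▸ subset_union_left)]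
  simpa using h0

theorem nstar_child (H : IsNearFarHierarchy cell lvl C M L K N I Nstar par)
    (hω : ω ∈ M m) (hω' : ω' ∈ K ω) :
    Nstar ω' = N ω' ∪ ⋃ m' ∈ Iic m, N (par m' ω) ∩ L m' := by
  rw [H.nstar_eq_of_neighbors_subset (H.mem_C_succ hω hω') (H.neighbors_subset_child hω hω'),
    Iio_add_one_eq_Iic]
  congr 1
  exact iUnion₂_congr fun m' hm' => by rw [H.par_child m ω hω ω' hω' m' hm']

theorem region_nstar_eq_child (H : IsNearFarHierarchy cell lvl C M L K N I Nstar par)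
    (hω : ω ∈ M m) (hω' : ω' ∈ K ω) :
    region cell (Nstar ω) = region cell (Nstar ω' ∪ I ω') := by
  have hregion : region cell (N ω ∩ M m) = region cell (N ω' ∪ I ω') := by
    rw [H.neighbors_union_interaction_child hω hω',
      region_biUnion_of_region_eq cell fun ω'' h => H.region_children m ω'' h.2]
  rw [H.nstar_eq, H.lvl_eq m ω (H.mem_C_of_mem_M hω), H.nstar_child hω hω', region_union,
    hregion]
  simp only [region_union]
  exact union_right_comm _ _ _

theorem interactionSet_M_eq (H : IsNearFarHierarchy cell lvl C M L K N I Nstar par) (m : ℕ) :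
    interactionSet cell Nstar (M m)
      = interactionSet cell (fun ω => Nstar ω ∪ I ω) (C (m + 1)) := by
  rw [H.C_succ m, interactionSet_biUnion]
  exact iUnion₂_congr fun ω hω => prod_region_eq_interactionSet_of_refines cell
    (H.region_children m ω hω) fun _ hω' => H.region_nstar_eq_child hω hω'

theorem interactionSet_C_eq (H : IsNearFarHierarchy cell lvl C M L K N I Nstar par) (m : ℕ) :
    interactionSet cell (fun ω => Nstar ω ∪ I ω) (C m)
      = (interactionSet cell Nstar (L m) ∪ interactionSet cell I (C m))
        ∪ interactionSet cell Nstar (M m) := by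
  rw [interactionSet_union_right, H.C_eq_union m, interactionSet_union_left, union_comm (M m)]
  ac_rfl

end IsNearFarHierarchy

theorem stmt_13_general {α ι : Type*} (cell : ι → Set α) (lvl : ι → ℕ)
    (C M L Lstar : ℕ → Set ι) (K : ι → Set ι) (N I : ι → Set ι) (par : ℕ → ι → ι)
    (Nstar : ι → Set ι) (Om : Set α) (Lmax : ℕ)
    (hCML : ∀ m, C m = M m ∪ L m)
    (hCnext : ∀ m, C (m + 1) = ⋃ ω ∈ M m, K ω)
    (hlvl : ∀ m, ∀ ω ∈ C m, lvl ω = m)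
    (hparself : ∀ ω, par (lvl ω) ω = ω)
    (hparchild : ∀ m, ∀ ω ∈ M m, ∀ ω' ∈ K ω, ∀ m' ≤ m, par m' ω' = par m' ω)
    (hrefine : ∀ m, ∀ ω ∈ M m, (⋃ ω' ∈ K ω, cell ω') = cell ω)
    (hNI : ∀ m, ∀ ω ∈ C (m + 1), N ω ∪ I ω = ⋃ ω'' ∈ N (par m ω) ∩ M m, K ω'')
    (hNstar : ∀ ω, Nstar ω
      = (N ω ∩ M (lvl ω)) ∪ ⋃ m ∈ Set.Iic (lvl ω), (N (par m ω) ∩ L m))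
    -- the domain is the union of the level-zero cells
    (hOm : Om = ⋃ ω ∈ C 0, cell ω)
    -- at level zero, neighbors and interaction list of a cell cover the whole level
    (hlevel0 : ∀ ω ∈ C 0, N ω ∪ I ω = C 0)
    -- `L*_ℓ = L_ℓ` for `ℓ < Lmax` and `L*_{Lmax} = C_{Lmax}`
    (hLstar : ∀ m < Lmax, Lstar m = L m) (hLstarTop : Lstar Lmax = C Lmax) :
    Om ×ˢ Om
      = (⋃ m ∈ Set.Iic Lmax, ⋃ ω ∈ Lstar m, cell ω ×ˢ ⋃ ω' ∈ Nstar ω, cell ω')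
        ∪ (⋃ m ∈ Set.Iic Lmax, ⋃ ω ∈ C m, cell ω ×ˢ ⋃ ω' ∈ I ω, cell ω') := by
  have H : IsNearFarHierarchy cell lvl C M L K N I Nstar par :=
    ⟨hCML, hCnext, hlvl, hparself, hparchild, hrefine, hNI, hNstar⟩
  have hbase : Om ×ˢ Om = interactionSet cell (fun ω => Nstar ω ∪ I ω) (C 0) := by
    rw [hOm]
    exact region_prod_region_eq_interactionSet cell fun ω hω =>
      H.nstar_union_interaction_eq_of_level_zero hω (hlevel0 ω hω)
  have htop : interactionSet cell Nstar (Lstar Lmax) ∪ interactionSet cell I (C Lmax)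
      = interactionSet cell (fun ω => Nstar ω ∪ I ω) (C Lmax) := by
    rw [hLstarTop, interactionSet_union_right]
  rw [eq_biUnion_Iio_union_of_succ hbase H.interactionSet_C_eq H.interactionSet_M_eq Lmax]
  change _ = (⋃ m ∈ Iic Lmax, interactionSet cell Nstar (Lstar m))
    ∪ ⋃ m ∈ Iic Lmax, interactionSet cell I (C m)
  simp only [← iUnion_union_distrib]
  rw [← Iio_insert, biUnion_insert, htop, union_comm]
  congr 1
  exact iUnion₂_congr fun m hm => by rw [hLstar m hm]

/-- Equation (spaceDecomp:OmOm): iterating the near/far splitting from level `0` to the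
finest level `Lmax` gives
`Ω × Ω = ⋃_{ℓ=0}^{Lmax} ⋃_{ω ∈ L*_ℓ} ω × N*(ω) ∪ ⋃_{ℓ=0}^{Lmax} ⋃_{ω ∈ C_ℓ} ω × I(ω)`. -/
theorem stmt_13 {α ι : Type*} (cell : ι → Set α) (lvl : ι → ℕ)
    (C M L Lstar : ℕ → Set ι) (K : ι → Set ι) (N I : ι → Set ι) (par : ℕ → ι → ι)
    (Nstar : ι → Set ι) (Om : Set α) (Lmax : ℕ)
    (hCML : ∀ m, C m = M m ∪ L m)
    (hMLdisj : ∀ m, M m ∩ L m = ∅)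
    (hCnext : ∀ m, C (m + 1) = ⋃ ω ∈ M m, K ω)
    (hlvl : ∀ m, ∀ ω ∈ C m, lvl ω = m)
    (hparself : ∀ ω, par (lvl ω) ω = ω)
    (hparchild : ∀ m, ∀ ω ∈ M m, ∀ ω' ∈ K ω, ∀ m' ≤ m, par m' ω' = par m' ω)
    (hrefine : ∀ m, ∀ ω ∈ M m, (⋃ ω' ∈ K ω, cell ω') = cell ω)
    (hNI : ∀ m, ∀ ω ∈ C (m + 1), N ω ∪ I ω = ⋃ ω'' ∈ N (par m ω) ∩ M m, K ω'')
    (hNIdisj : ∀ ω, N ω ∩ I ω = ∅)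
    (hNstar : ∀ ω, Nstar ω
      = (N ω ∩ M (lvl ω)) ∪ ⋃ m ∈ Set.Iic (lvl ω), (N (par m ω) ∩ L m))
    -- the domain is the union of the level-zero cells
    (hOm : Om = ⋃ ω ∈ C 0, cell ω)
    -- at level zero, neighbors and interaction list of a cell cover the whole level
    (hlevel0 : ∀ ω ∈ C 0, N ω ∪ I ω = C 0)
    -- `L*_ℓ = L_ℓ` for `ℓ < Lmax` and `L*_{Lmax} = C_{Lmax}`
    (hLstar : ∀ m < Lmax, Lstar m = L m) (hLstarTop : Lstar Lmax = C Lmax) :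
    Om ×ˢ Om
      = (⋃ m ∈ Set.Iic Lmax, ⋃ ω ∈ Lstar m, cell ω ×ˢ ⋃ ω' ∈ Nstar ω, cell ω')
        ∪ (⋃ m ∈ Set.Iic Lmax, ⋃ ω ∈ C m, cell ω ×ˢ ⋃ ω' ∈ I ω, cell ω') :=
  stmt_13_general cell lvl C M L Lstar K N I par Nstar Om Lmax hCML hCnext hlvl hparself hparchild
    hrefine hNI hNstar hOm hlevel0 hLstar hLstarTop
end
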